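/- arXiv:math/0008012 — 5 statements merged into one kernel-verified Lean document; each statement's English description precedes it below -/
import Mathlib

section
/- Let Γ be a finitely generated group such that every group homomorphism from Γ into the group of homeomorphisms of the circle has a finite orbit. Then every group homomorphism from Γ into the multiplicative group of positive real numbers is trivial, i.e., sends every element of Γ to 1. -/
/-- The group of self-homeomorphisms of a topological space, under composition
(`(f * g) x = f (g x)`). -/
instance homeomorphGroup (X : Type*) [TopologicalSpace X] : Group (X ≃ₜ X) where
  mul f g := g.trans f
  one := Homeomorph.refl X
  inv := Homeomorph.symm
  mul_assoc _ _ _ := rfl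
  one_mul _ := Homeomorph.ext fun _ => rfl
  mul_one _ := Homeomorph.ext fun _ => rfl
  inv_mul_cancel f := Homeomorph.ext f.symm_apply_apply

/-- If `Γ` is a finitely generated group such that every group
homomorphism from `Γ` into the group of homeomorphisms of the circle `ℝ/ℤ` has a
finite orbit, then every group homomorphism from `Γ` into the multiplicative group
of positive real numbers is trivial. -/
theorem stmt2 (Γ : Type*) [Group Γ] [Group.FG Γ]
    (h : ∀ ρ : Γ →* (UnitAddCircle ≃ₜ UnitAddCircle),
      ∃ x : UnitAddCircle, (Set.range fun γ : Γ => ρ γ x).Finite)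
    (f : Γ →* {r : ℝ // 0 < r}) :
    ∀ γ : Γ, f γ = 1 := by
  intro γ₀
  by_contra hne
  set c : ℝ := Real.log ((f γ₀ : ℝ)) with hc
  have hcpos : (0:ℝ) < (f γ₀ : ℝ) := (f γ₀).2
  have hc0 : c ≠ 0 := by
    rw [hc]
    intro hlog
    rcases Real.log_eq_zero.mp hlog with h1 | h1 | h1
    · exact hcpos.ne' h1
    · exact hne (Subtype.ext h1)
    · linarith
  set t : ℝ := Real.sqrt 2 / c with ht
  -- the rotation action
  have key : ∀ γ δ : Γ, t * Real.log ((f (γ * δ) : ℝ)) =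
      t * Real.log ((f γ : ℝ)) + t * Real.log ((f δ : ℝ)) := by
    intro γ δ
    have : ((f (γ * δ) : ℝ)) = ((f γ : ℝ)) * ((f δ : ℝ)) := by
      rw [map_mul]; rfl
    rw [this, Real.log_mul (f γ).2.ne' (f δ).2.ne', mul_add]
  let ρ : Γ →* (UnitAddCircle ≃ₜ UnitAddCircle) :=
    { toFun := fun γ => Homeomorph.addLeft ((↑(t * Real.log ((f γ : ℝ))) : UnitAddCircle))
      map_one' := Homeomorph.ext fun x => by
        show (↑(t * Real.log ((f (1:Γ) : ℝ))) : UnitAddCircle) + x = x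
        simp [map_one]
      map_mul' := fun γ δ => Homeomorph.ext fun x => by
        show (↑(t * Real.log ((f (γ * δ) : ℝ))) : UnitAddCircle) + x =
          ↑(t * Real.log ((f γ : ℝ))) + (↑(t * Real.log ((f δ : ℝ))) + x)
        rw [key, AddCircle.coe_add, add_assoc] }
  obtain ⟨x, hx⟩ := h ρ
  -- the orbit of powers of γ₀
  have horbit : ∀ n : ℕ, ρ (γ₀ ^ n) x = (↑((n : ℝ) * Real.sqrt 2) : UnitAddCircle) + x := by
    intro n
    show (↑(t * Real.log ((f (γ₀ ^ n) : ℝ))) : UnitAddCircle) + x = _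
    have h1 : ((f (γ₀ ^ n) : ℝ)) = ((f γ₀ : ℝ)) ^ n := by
      rw [map_pow]; exact Positive.val_pow _ _
    have h2 : t * Real.log ((f (γ₀ ^ n) : ℝ)) = (n : ℝ) * Real.sqrt 2 := by
      rw [h1, Real.log_pow, ht]
      field_simp
      ring
    rw [h2]
  -- finitely many values, so two coincide
  have hfin : (Set.range fun n : ℕ => ρ (γ₀ ^ n) x).Finite :=
    hx.subset (by rintro _ ⟨n, rfl⟩; exact ⟨γ₀ ^ n, rfl⟩)
  have : ¬ Function.Injective (fun n : ℕ => ρ (γ₀ ^ n) x) := by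
    intro hinj
    exact Set.infinite_range_of_injective hinj hfin
  rw [Function.not_injective_iff] at this
  obtain ⟨m, n, hmn, hne'⟩ := this
  rw [horbit, horbit, add_left_inj] at hmn
  -- deduce rationality of √2
  have hz : (↑(((m : ℝ) - n) * Real.sqrt 2) : UnitAddCircle) = 0 := by
    rw [sub_mul, AddCircle.coe_sub, hmn, sub_self]
  rw [AddCircle.coe_eq_zero_iff] at hz
  obtain ⟨k, hk⟩ := hz
  have hd : ((m : ℝ) - n) ≠ 0 := by
    intro h0
    apply hne'
    have := sub_eq_zero.mp h0
    exact_mod_cast this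
  have hs : Real.sqrt 2 = ((k : ℚ) / ((m : ℚ) - n) : ℚ) := by
    have hk' : ((m : ℝ) - n) * Real.sqrt 2 = (k : ℝ) := by
      rw [← hk]; simp
    push_cast
    field_simp at hk' ⊢
    linarith [hk']
  exact irrational_sqrt_two ⟨_, hs.symm⟩
end

section
/- Let Γ be a finitely generated group whose abelianization Γ/[Γ,Γ] is finite. Let X be a compact subset of [0,1] with 0 ∈ X such that 0 is an accumulation point of X. Suppose that for each γ ∈ Γ we are given real numbers a_γ > 0, b_γ > 0 and a function φ_γ : ℝ → ℝ such that: φ_γ(0) = 0; φ_γ restricted to [0, a_γ) is a bijection onto [0, b_γ); and φ_γ is continuously differentiable on [0, a_γ) with everywhere strictly positive derivative there. Assume further that for all γ₁, γ₂ ∈ Γ there exists c > 0 such that for every x ∈ [0, c] ∩ X one has x < a_{γ₂}, φ_{γ₂}(x) < a_{γ₁}, and φ_{γ₁γ₂}(x) = φ_{γ₁}(φ_{γ₂}(x)). Then for every γ ∈ Γ the right derivative of φ_γ at 0 equals 1. -/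
open Set Filter Topology

/-!
By the chain rule, the right derivative at the common fixed point `0`, `γ ↦ φ' γ 0`, is a
homomorphism from `Γ` to the multiplicative group of positive reals; composition is only known on
`X`, but `0` is an accumulation point of `X`, which is enough for derivatives to be unique.
A homomorphism from a group with finite abelianization to a torsion-free abelian group is trivial.
-/

theorem MonoidHom.eq_one_of_finite_abelianization {G M : Type*} [Group G] [CommGroup M]
    [IsMulTorsionFree M] [Finite (Abelianization G)] (f : G →* M) : f = 1 := by
  ext g
  rw [← Abelianization.lift_apply_of f g]
  exact ((Abelianization.lift f).isOfFinOrder (isOfFinOrder_of_finite _)).eq_one'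

theorem AccPt.eq_mul_of_hasDerivWithinAt_comp {𝕜 : Type*} [NontriviallyNormedField 𝕜]
    {f g h : 𝕜 → 𝕜} {f' g' h' x : 𝕜} {s t : Set 𝕜} (hacc : AccPt x (𝓟 s))
    (hh : HasDerivWithinAt h h' s x) (hf : HasDerivWithinAt f f' t (g x))
    (hg : HasDerivWithinAt g g' s x) (hst : MapsTo g s t) (heq : EqOn h (f ∘ g) s)
    (hx : h x = f (g x)) : h' = f' * g' :=
  hacc.uniqueDiffWithinAt.eq_deriv s hh ((hf.comp x hg hst).congr heq hx)

theorem eq_mul_of_rightDeriv_of_eqOn_comp {X : Set ℝ} (hacc : AccPt 0 (𝓟 X))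
    (hX : X ⊆ Ici 0) {f g h : ℝ → ℝ} {f' g' h' c : ℝ}
    (hf : HasDerivWithinAt f f' (Ici 0) 0) (hg : HasDerivWithinAt g g' (Ici 0) 0)
    (hh : HasDerivWithinAt h h' (Ici 0) 0) (hg0 : g 0 = 0) (hh0 : h 0 = f 0) (hc : 0 < c)
    (hcomp : ∀ x ∈ Icc 0 c ∩ X, 0 ≤ g x ∧ h x = f (g x)) : h' = f' * g' := by
  have hsub : Icc 0 c ∩ X ⊆ Ici 0 := fun x hx => hx.1.1
  have hacc' : AccPt 0 (𝓟 (Icc 0 c ∩ X)) :=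
    (hacc.nhds_inter (Iio_mem_nhds hc)).mono <|
      principal_mono.2 fun x hx => ⟨⟨hX hx.2, hx.1.le⟩, hx.2⟩
  refine AccPt.eq_mul_of_hasDerivWithinAt_comp hacc' (hh.mono hsub) (hg0.symm ▸ hf)
    (hg.mono hsub) (fun x hx => (hcomp x hx).1) (fun x hx => (hcomp x hx).2) ?_
  rw [hh0, hg0]

theorem stmt4_general (Γ : Type*) [Group Γ]
    (hab : Finite (Abelianization Γ))
    (X : Set ℝ) (hXsub : X ⊆ Icc 0 1)
    (h0acc : (0 : ℝ) ∈ closure (X \ {0}))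
    (a b : Γ → ℝ) (ha : ∀ γ, 0 < a γ)
    (φ : Γ → ℝ → ℝ) (φ' : Γ → ℝ → ℝ)
    (hφ0 : ∀ γ, φ γ 0 = 0)
    (hbij : ∀ γ, BijOn (φ γ) (Ico 0 (a γ)) (Ico 0 (b γ)))
    (hderiv : ∀ γ, ∀ x ∈ Ico 0 (a γ),
      HasDerivWithinAt (φ γ) (φ' γ x) (Ico 0 (a γ)) x)
    (hderivpos : ∀ γ, ∀ x ∈ Ico 0 (a γ), 0 < φ' γ x)
    (hcomp : ∀ γ₁ γ₂ : Γ, ∃ c > 0, ∀ x ∈ Icc 0 c ∩ X,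
      x < a γ₂ ∧ φ γ₂ x < a γ₁ ∧ φ (γ₁ * γ₂) x = φ γ₁ (φ γ₂ x)) :
    ∀ γ : Γ, Tendsto (fun x : ℝ => (φ γ x - φ γ 0) / x) (nhdsWithin 0 (Ioi 0))
      (nhds 1) := by
  have hzero (γ : Γ) : (0 : ℝ) ∈ Ico 0 (a γ) := ⟨le_rfl, ha γ⟩
  have hright (γ : Γ) : HasDerivWithinAt (φ γ) (φ' γ 0) (Ici 0) 0 :=
    (hderiv γ 0 (hzero γ)).mono_of_mem_nhdsWithin (Ico_mem_nhdsGE (ha γ))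
  have hacc : AccPt 0 (𝓟 X) :=
    accPt_principal_iff_nhdsWithin.2 (mem_closure_iff_nhdsWithin_neBot.1 h0acc)
  have hmul (γ₁ γ₂ : Γ) : φ' (γ₁ * γ₂) 0 = φ' γ₁ 0 * φ' γ₂ 0 := by
    obtain ⟨c, hc, hC⟩ := hcomp γ₁ γ₂
    refine eq_mul_of_rightDeriv_of_eqOn_comp hacc (fun x hx => (hXsub hx).1) (hright γ₁)
      (hright γ₂) (hright _) (hφ0 γ₂) (by rw [hφ0, hφ0]) hc fun x hx => ?_
    obtain ⟨hxa, -, heq⟩ := hC x hx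
    exact ⟨((hbij γ₂).mapsTo ⟨hx.1.1, hxa⟩).1, heq⟩
  let D : Γ →* {r : ℝ // 0 < r} :=
    MonoidHom.mk' (fun γ => ⟨φ' γ 0, hderivpos γ 0 (hzero γ)⟩)
      fun γ₁ γ₂ => Subtype.ext (hmul γ₁ γ₂)
  have hD : D = 1 := D.eq_one_of_finite_abelianization
  intro γ
  have hone : φ' γ 0 = 1 := congrArg Subtype.val (DFunLike.congr_fun hD γ)
  have hslope :=
    (hasDerivWithinAt_iff_tendsto_slope' (s := Ioi 0) (lt_irrefl 0)).1 (hright γ).Ioi_of_Ici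
  simpa only [slope_fun_def_field, sub_zero, hone] using hslope

/-- Under the hypotheses of the generalized Thurston stability lemma
(`Γ` finitely generated with finite abelianization, `X ⊆ [0,1]` compact with `0 ∈ X`
an accumulation point, `φ γ : ℝ → ℝ` fixing `0`, bijective from `[0, a γ)` onto
`[0, b γ)`, continuously differentiable there with strictly positive derivative,
and `φ (γ₁γ₂)` agreeing with `φ γ₁ ∘ φ γ₂` on `[0,c] ∩ X` for some `c > 0`),
the right derivative of each `φ γ` at `0`, i.e. the limit of
`(φ γ x − φ γ 0)/x` as `x → 0⁺`, equals `1`. -/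
theorem stmt4 (Γ : Type*) [Group Γ] [Group.FG Γ]
    (hab : Finite (Abelianization Γ))
    (X : Set ℝ) (hXcompact : IsCompact X) (hXsub : X ⊆ Icc 0 1)
    (h0X : (0 : ℝ) ∈ X) (h0acc : (0 : ℝ) ∈ closure (X \ {0}))
    (a b : Γ → ℝ) (ha : ∀ γ, 0 < a γ) (hb : ∀ γ, 0 < b γ)
    (φ : Γ → ℝ → ℝ) (φ' : Γ → ℝ → ℝ)
    (hφ0 : ∀ γ, φ γ 0 = 0)
    (hbij : ∀ γ, BijOn (φ γ) (Ico 0 (a γ)) (Ico 0 (b γ)))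
    (hderiv : ∀ γ, ∀ x ∈ Ico 0 (a γ),
      HasDerivWithinAt (φ γ) (φ' γ x) (Ico 0 (a γ)) x)
    (hderivcont : ∀ γ, ContinuousOn (φ' γ) (Ico 0 (a γ)))
    (hderivpos : ∀ γ, ∀ x ∈ Ico 0 (a γ), 0 < φ' γ x)
    (hcomp : ∀ γ₁ γ₂ : Γ, ∃ c > 0, ∀ x ∈ Icc 0 c ∩ X,
      x < a γ₂ ∧ φ γ₂ x < a γ₁ ∧ φ (γ₁ * γ₂) x = φ γ₁ (φ γ₂ x)) :
    ∀ γ : Γ, Tendsto (fun x : ℝ => (φ γ x - φ γ 0) / x) (nhdsWithin 0 (Ioi 0))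
      (nhds 1) :=
  stmt4_general Γ hab X hXsub h0acc a b ha φ φ' hφ0 hbij hderiv hderivpos hcomp
end

section
/- (Thurston stability on the interval) Let Γ be a finitely generated group whose abelianization Γ/[Γ,Γ] is finite. Suppose Γ acts on [0,1] by C¹ diffeomorphisms fixing 0; precisely, suppose γ ↦ f_γ is a group homomorphism from Γ into the group of bijections of [0,1] such that each f_γ satisfies f_γ(0) = 0 and f_γ is continuously differentiable on [0,1] (one-sided at the endpoints) with everywhere strictly positive derivative. Then the action is trivial: f_γ(x) = x for every γ ∈ Γ and every x ∈ [0,1]. -/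
/-!
The set of common fixed points is closed, so by continuous induction on `[0,1]` it suffices to
show that every common fixed point `a < 1` has a right neighbourhood of common fixed points.
By the chain rule `γ ↦ log f'_γ(a)` is a homomorphism to `ℝ`, hence zero since the
abelianization is finite: every `f_γ` is tangent to the identity at `a`. So the displacements
`D_γ(x) = f_γ(x) - x` satisfy `D_{γη} = D_γ + D_η + o(D_η)` near `a`. Normalising by
`d = ∑_{t ∈ S} |D_t|` for a finite generating set `S`, an ultrafilter limit of `D / d` is again a
homomorphism `Γ → ℝ`, hence zero; thus `d = o(d)`, i.e. `d = 0` near `a`.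
-/

open Set Filter Topology Asymptotics

theorem eq_zero_of_map_mul_eq_add {Γ M : Type*} [Group Γ] [Finite (Abelianization Γ)]
    [AddCommGroup M] [IsAddTorsionFree M] {φ : Γ → M}
    (hφ : ∀ γ η, φ (γ * η) = φ γ + φ η) (γ : Γ) : φ γ = 0 := by
  let ψ : Γ →* Multiplicative M := MonoidHom.mk' (fun γ => .ofAdd (φ γ)) fun γ η => by
    rw [hφ]; rfl
  obtain ⟨n, hn, hpow⟩ := (isOfFinOrder_of_finite (Abelianization.of γ)).exists_pow_eq_one
  have hψ : ψ γ ^ n = 1 := by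
    rw [← Abelianization.lift_apply_of ψ, ← map_pow, hpow, map_one]
  have : n • φ γ = n • (0 : M) := by
    rw [smul_zero]; exact congrArg Multiplicative.toAdd hψ
  exact nsmul_right_injective hn.ne' this

section AlmostAdditive

variable {Γ X : Type*} [Group Γ] {l : Filter X}

theorem Asymptotics.IsLittleO.eventuallyEq_zero_of_self {f : X → ℝ} (h : f =o[l] f) :
    f =ᶠ[l] 0 :=
  (not_frequently.1 fun hne => isLittleO_irrefl hne h).mono fun _ => not_not.1

theorem Ultrafilter.exists_tendsto_div_of_isBigO (U : Ultrafilter X) {u v : X → ℝ}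
    (h : u =O[(U : Filter X)] v) : ∃ L, Tendsto (fun x => u x / v x) U (𝓝 L) := by
  obtain ⟨C, hC₀, hC⟩ := h.exists_pos
  have hbound : ∀ᶠ x in (U : Filter X), u x / v x ∈ Icc (-C) C := by
    filter_upwards [hC.bound] with x hx
    rw [mem_Icc, ← abs_le, abs_div]
    exact div_le_of_le_mul₀ (abs_nonneg _) hC₀.le hx
  obtain ⟨L, -, hL⟩ := isCompact_Icc.ultrafilter_le_nhds (U.map fun x => u x / v x)
    (le_principal_iff.2 hbound)
  exact ⟨L, hL⟩

theorem isLittleO_of_isBigO_of_isLittleO_map_mul_sub [Finite (Abelianization Γ)] {D : Γ → X → ℝ}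
    {d : X → ℝ} (hO : ∀ γ, D γ =O[l] d)
    (ho : ∀ γ η, (fun x => D (γ * η) x - D γ x - D η x) =o[l] d) (γ : Γ) : D γ =o[l] d := by
  by_contra hγ
  obtain ⟨c, hc, hfreq⟩ : ∃ c > 0, ∃ᶠ x in l, c * ‖d x‖ < ‖D γ x‖ := by
    simpa [IsLittleO_def, IsBigOWith_def, Filter.not_eventually] using hγ
  have := frequently_iff_neBot.1 hfreq
  set U := Ultrafilter.of (l ⊓ 𝓟 {x | c * ‖d x‖ < ‖D γ x‖})
  have hUl : (U : Filter X) ≤ l := (Ultrafilter.of_le _).trans inf_le_left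
  have hUc : ∀ᶠ x in (U : Filter X), c * ‖d x‖ < ‖D γ x‖ :=
    Ultrafilter.of_le _ (mem_inf_of_right (mem_principal_self _))
  choose φ hφ using fun η => U.exists_tendsto_div_of_isBigO ((hO η).mono hUl)
  have hadd : ∀ γ η, φ (γ * η) = φ γ + φ η := fun γ η => by
    have h := ((hφ (γ * η)).sub (hφ γ)).sub (hφ η)
    have h0 := ((ho γ η).mono hUl).tendsto_div_nhds_zero
    simp only [sub_div] at h0
    linarith [tendsto_nhds_unique h h0]
  have hlower : c ≤ |φ γ| := by
    refine ge_of_tendsto (hφ γ).abs ?_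
    obtain ⟨C, -, hC⟩ := ((hO γ).mono hUl).exists_pos
    filter_upwards [hUc, hC.bound] with x hlt hle
    simp only [Real.norm_eq_abs] at hlt hle
    have hd : 0 < |d x| := (abs_nonneg _).lt_of_ne fun h0 => by
      rw [← h0] at hlt hle
      linarith
    rw [abs_div, le_div_iff₀ hd]
    exact hlt.le
  rw [eq_zero_of_map_mul_eq_add hadd γ, abs_zero] at hlower
  exact hc.not_ge hlower

theorem isBigO_sum_abs_of_isLittleO_map_mul_sub {D : Γ → X → ℝ}
    (hmul : ∀ γ η, (fun x => D (γ * η) x - D γ x - D η x) =o[l] D η)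
    {S : Finset Γ} (hS : Submonoid.closure (S : Set Γ) = ⊤) (γ : Γ) :
    D γ =O[l] fun x => ∑ t ∈ S, |D t x| := by
  have hγ : γ ∈ Submonoid.closure (S : Set Γ) := hS ▸ Submonoid.mem_top γ
  induction hγ using Submonoid.closure_induction with
  | mem t ht =>
    refine IsBigO.of_bound 1 (Eventually.of_forall fun x => ?_)
    rw [one_mul, Real.norm_eq_abs, Real.norm_of_nonneg (by positivity)]
    exact Finset.single_le_sum (f := fun t => |D t x|) (fun _ _ => abs_nonneg _) ht
  | one =>
    have h1 : D 1 =o[l] D 1 := isLittleO_neg_left.1 <| (hmul 1 1).congr_left fun x => by simp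
    exact h1.eventuallyEq_zero_of_self.trans_isBigO (isBigO_zero _ _)
  | mul γ η _ _ hγ hη =>
    exact ((((hmul γ η).isBigO.trans hη).add hγ).add hη).congr_left fun x => by ring

theorem eventually_eq_zero_of_isLittleO_map_mul_sub [Finite (Abelianization Γ)] {D : Γ → X → ℝ}
    (hmul : ∀ γ η, (fun x => D (γ * η) x - D γ x - D η x) =o[l] D η)
    {S : Finset Γ} (hS : Submonoid.closure (S : Set Γ) = ⊤) :
    ∀ᶠ x in l, ∀ t ∈ S, D t x = 0 := by
  have hO := isBigO_sum_abs_of_isLittleO_map_mul_sub hmul hS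
  have ho := isLittleO_of_isBigO_of_isLittleO_map_mul_sub hO fun γ η =>
    (hmul γ η).trans_isBigO (hO η)
  have hsum : (fun x => ∑ t ∈ S, |D t x|) =o[l] fun x => ∑ t ∈ S, |D t x| :=
    IsLittleO.fun_sum fun t _ => isLittleO_abs_left.2 (ho t)
  filter_upwards [hsum.eventuallyEq_zero_of_self] with x hx t ht
  exact abs_eq_zero.1 <| (Finset.sum_eq_zero_iff_of_nonneg fun _ _ => abs_nonneg _).1 hx t ht

end AlmostAdditive

theorem Convex.isLittleO_sub_sub_of_continuousWithinAt_deriv {E : Type*} [NormedAddCommGroup E]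
    [NormedSpace ℝ E] {f f' : ℝ → E} {s : Set ℝ} {a : ℝ} (hs : Convex ℝ s)
    (hf : ∀ x ∈ s, HasDerivWithinAt f (f' x) s x) (hf' : ContinuousWithinAt f' s a) :
    (fun p : ℝ × ℝ => f p.2 - f p.1 - (p.2 - p.1) • f' a) =o[𝓝[s] a ×ˢ 𝓝[s] a]
      fun p => p.2 - p.1 := by
  refine IsLittleO.of_bound fun c hc => ?_
  obtain ⟨δ, hδ, hball⟩ :=
    Metric.mem_nhdsWithin_iff.1 (hf'.tendsto (Metric.closedBall_mem_nhds (f' a) hc))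
  have ht : Metric.ball a δ ∩ s ∈ 𝓝[s] a :=
    mem_nhdsWithin.2 ⟨_, Metric.isOpen_ball, Metric.mem_ball_self hδ, subset_rfl⟩
  filter_upwards [prod_mem_prod ht ht] with p ⟨hp₁, hp₂⟩
  have hderiv : ∀ x ∈ Metric.ball a δ ∩ s, HasDerivWithinAt (fun y => f y - y • f' a)
      (f' x - (1 : ℝ) • f' a) (Metric.ball a δ ∩ s) x := fun x hx =>
    ((hf x hx.2).mono inter_subset_right).sub ((hasDerivWithinAt_id x _).smul_const (f' a))
  have hbound : ∀ x ∈ Metric.ball a δ ∩ s, ‖f' x - (1 : ℝ) • f' a‖ ≤ c := fun x hx => by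
    rw [one_smul, ← dist_eq_norm]
    exact hball hx
  have := ((convex_ball a δ).inter hs).norm_image_sub_le_of_norm_hasDerivWithin_le
    hderiv hbound hp₁ hp₂
  rwa [sub_sub_sub_comm, ← sub_smul] at this

structure IsC1Action {Γ : Type*} [Group Γ] (s : Set ℝ) (f f' : Γ → ℝ → ℝ) : Prop where
  map_one : ∀ x ∈ s, f 1 x = x
  map_mul : ∀ γ η, ∀ x ∈ s, f (γ * η) x = f γ (f η x)
  mapsTo : ∀ γ, MapsTo (f γ) s s
  hasDerivWithinAt : ∀ γ, ∀ x ∈ s, HasDerivWithinAt (f γ) (f' γ x) s x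
  continuousOn_deriv : ∀ γ, ContinuousOn (f' γ) s

namespace IsC1Action

variable {Γ : Type*} [Group Γ] {s : Set ℝ} {f f' : Γ → ℝ → ℝ} {a : ℝ}

theorem continuousOn (hf : IsC1Action s f f') (γ : Γ) : ContinuousOn (f γ) s :=
  fun x hx => (hf.hasDerivWithinAt γ x hx).continuousWithinAt

theorem isClosed_fixedPoints_inter (hf : IsC1Action s f f') (hs : IsClosed s) :
    IsClosed ({x | ∀ γ, f γ x = x} ∩ s) := by
  have hset : {x | ∀ γ, f γ x = x} ∩ s = ⋂ γ, s ∩ (fun x => f γ x - x) ⁻¹' {0} := by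
    ext x
    simp only [mem_inter_iff, mem_ofPred_eq, mem_iInter, mem_preimage, mem_singleton_iff,
      sub_eq_zero, forall_and, forall_const]
    exact and_comm
  rw [hset]
  exact isClosed_iInter fun γ =>
    ((hf.continuousOn γ).sub continuousOn_id).preimage_isClosed_of_isClosed hs isClosed_singleton

theorem tendsto_nhdsWithin (hf : IsC1Action s f f') (ha : a ∈ s) {γ : Γ} (hγ : f γ a = a) :
    Tendsto (f γ) (𝓝[s] a) (𝓝[s] a) := by
  simpa only [hγ] using
    (hf.hasDerivWithinAt γ a ha).continuousWithinAt.tendsto_nhdsWithin (hf.mapsTo γ)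

theorem deriv_mul_of_fixed (hf : IsC1Action s f f') (ha : a ∈ s)
    (hsa : UniqueDiffWithinAt ℝ s a) (γ : Γ) {η : Γ} (hη : f η a = a) :
    f' (γ * η) a = f' γ a * f' η a := by
  have hcomp := (hf.hasDerivWithinAt γ (f η a) (hf.mapsTo η ha)).comp a
    (hf.hasDerivWithinAt η a ha) (hf.mapsTo η)
  rw [hη] at hcomp
  exact hsa.eq_deriv _ (hf.hasDerivWithinAt (γ * η) a ha)
    (hcomp.congr (fun x hx => hf.map_mul γ η x hx) (hf.map_mul γ η a ha))

theorem deriv_eq_one_of_fixed [Finite (Abelianization Γ)] (hf : IsC1Action s f f') (ha : a ∈ s)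
    (hsa : UniqueDiffWithinAt ℝ s a) (hfix : ∀ γ, f γ a = a) (hpos : ∀ γ, 0 < f' γ a)
    (γ : Γ) : f' γ a = 1 := by
  refine Real.eq_one_of_pos_of_log_eq_zero (hpos γ) <|
    eq_zero_of_map_mul_eq_add (φ := fun γ => Real.log (f' γ a)) (fun γ η => ?_) γ
  rw [hf.deriv_mul_of_fixed ha hsa γ (hfix η), Real.log_mul (hpos γ).ne' (hpos η).ne']

theorem isLittleO_displacement_mul (hf : IsC1Action s f f') (hs : Convex ℝ s) (ha : a ∈ s)
    {γ η : Γ} (hγ : f' γ a = 1) (hη : f η a = a) :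
    (fun x => (f (γ * η) x - x) - (f γ x - x) - (f η x - x)) =o[𝓝[s] a] fun x => f η x - x := by
  have h := (hs.isLittleO_sub_sub_of_continuousWithinAt_deriv (hf.hasDerivWithinAt γ)
    (hf.continuousOn_deriv γ a ha)).comp_tendsto (tendsto_id.prodMk (hf.tendsto_nhdsWithin ha hη))
  refine h.congr' ?_ (Eventually.of_forall fun x => rfl)
  filter_upwards [self_mem_nhdsWithin] with x hx
  simp only [Function.comp_apply, id, hγ, smul_eq_mul, mul_one, hf.map_mul γ η x hx]
  ring

theorem eventually_forall_eq_of_fixed [Group.FG Γ] [Finite (Abelianization Γ)]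
    (hf : IsC1Action s f f') (hs : Convex ℝ s) (ha : a ∈ s) (hsa : UniqueDiffWithinAt ℝ s a)
    (hfix : ∀ γ, f γ a = a) (hpos : ∀ γ, 0 < f' γ a) :
    ∀ᶠ x in 𝓝[s] a, ∀ γ, f γ x = x := by
  obtain ⟨S, hS⟩ := Monoid.FG.fg_top (M := Γ)
  have hderiv_one := hf.deriv_eq_one_of_fixed ha hsa hfix hpos
  filter_upwards [eventually_eq_zero_of_isLittleO_map_mul_sub (D := fun γ x => f γ x - x)
    (fun γ η => hf.isLittleO_displacement_mul hs ha (hderiv_one γ) (hfix η)) hS,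
    self_mem_nhdsWithin] with x hSfix hx γ
  have hγ : γ ∈ Submonoid.closure (S : Set Γ) := hS ▸ Submonoid.mem_top γ
  induction hγ using Submonoid.closure_induction with
  | mem t ht => exact sub_eq_zero.1 (hSfix t ht)
  | one => exact hf.map_one x hx
  | mul γ η _ _ hγ hη => rw [hf.map_mul γ η x hx, hη, hγ]

end IsC1Action

/-- Thurston stability on the interval. Let `Γ` be a finitely
generated group with finite abelianization, acting on `[0,1]` by `C¹` diffeomorphisms
fixing `0`: i.e. `γ ↦ f γ` sends `1` to the identity on `[0,1]`, satisfies
`f (γ₁γ₂) = f γ₁ ∘ f γ₂` on `[0,1]`, and each `f γ` maps `[0,1]` bijectively onto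
itself, fixes `0`, and is continuously differentiable on `[0,1]` (one-sided at the
endpoints) with everywhere strictly positive derivative `f' γ`. Then the action is
trivial: `f γ x = x` for all `γ ∈ Γ` and `x ∈ [0,1]`. -/
theorem stmt6 (Γ : Type*) [Group Γ] [Group.FG Γ]
    (hab : Finite (Abelianization Γ))
    (f : Γ → ℝ → ℝ) (f' : Γ → ℝ → ℝ)
    (hone : ∀ x ∈ Icc (0:ℝ) 1, f 1 x = x)
    (hmul : ∀ γ₁ γ₂ : Γ, ∀ x ∈ Icc (0:ℝ) 1, f (γ₁ * γ₂) x = f γ₁ (f γ₂ x))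
    (hbij : ∀ γ : Γ, BijOn (f γ) (Icc (0:ℝ) 1) (Icc (0:ℝ) 1))
    (hf0 : ∀ γ : Γ, f γ 0 = 0)
    (hderiv : ∀ γ : Γ, ∀ x ∈ Icc (0:ℝ) 1,
      HasDerivWithinAt (f γ) (f' γ x) (Icc (0:ℝ) 1) x)
    (hderivcont : ∀ γ : Γ, ContinuousOn (f' γ) (Icc (0:ℝ) 1))
    (hderivpos : ∀ γ : Γ, ∀ x ∈ Icc (0:ℝ) 1, 0 < f' γ x) :
    ∀ γ : Γ, ∀ x ∈ Icc (0:ℝ) 1, f γ x = x := by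
  have hf : IsC1Action (Icc (0:ℝ) 1) f f' :=
    ⟨hone, hmul, fun γ => (hbij γ).mapsTo, hderiv, hderivcont⟩
  have hfixed : Icc (0:ℝ) 1 ⊆ {x | ∀ γ, f γ x = x} :=
    (hf.isClosed_fixedPoints_inter isClosed_Icc).Icc_subset_of_forall_mem_nhdsWithin hf0
      fun a ⟨hfix, ha⟩ => nhdsWithin_le_of_mem (Icc_mem_nhdsGT_of_mem ha) <|
        hf.eventually_forall_eq_of_fixed (convex_Icc 0 1) (Ico_subset_Icc_self ha)
          (uniqueDiffOn_Icc one_pos a (Ico_subset_Icc_self ha)) hfix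
          fun γ => hderivpos γ a (Ico_subset_Icc_self ha)
  exact fun γ x hx => hfixed hx γ
end

section
/- If a finite group H acts on the circle by orientation-preserving C¹ diffeomorphisms (i.e., there is a group homomorphism ρ from H into the homeomorphism group of ℝ/ℤ such that each ρ(h) is an orientation-preserving C¹ diffeomorphism of the circle), then the action of the commutator subgroup [H,H] is trivial: ρ(h) is the identity for every h ∈ [H,H]. -/
/-- A homeomorphism `g` of the circle `ℝ/ℤ` is an orientation-preserving `C¹`
diffeomorphism if it admits a lift `F : ℝ → ℝ` that is continuously differentiable
with everywhere strictly positive derivative, satisfies `F (x+1) = F x + 1`, and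
satisfies `π ∘ F = g ∘ π` where `π : ℝ → ℝ/ℤ` is the natural projection. -/
def IsOrientationPreservingC1Diffeo (g : UnitAddCircle ≃ₜ UnitAddCircle) : Prop :=
  ∃ F : ℝ → ℝ, ContDiff ℝ 1 F ∧ (∀ x : ℝ, 0 < deriv F x) ∧
    (∀ x : ℝ, F (x + 1) = F x + 1) ∧
    ∀ x : ℝ, ((F x : UnitAddCircle)) = g (x : UnitAddCircle)


/-!
Choose lifts `F h : ℝ → ℝ` of the `ρ h`. Two lifts of the same circle map differ by a constant,
so `F h ∘ F k = F (h * k) + c h k`. Averaging over the finite group, the strictly increasing map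
`Ψ = ∑ h, F h` satisfies `Ψ ∘ F k = Ψ + d k` for constants `d k`; thus every lift is conjugate by
`Ψ` to a translation, the lifts commute pairwise, and so the `ρ h` generate an abelian group.
-/

theorem AddCircle.exists_add_const_of_coe_eq {p : ℝ} {f g : ℝ → ℝ} (hf : Continuous f)
    (hg : Continuous g) (h : ∀ x, (f x : AddCircle p) = g x) : ∃ c, ∀ x, f x = g x + c := by
  refine ⟨f 0 - g 0, fun x => ?_⟩
  have := (isCoveringMap_coe p).const_of_comp (hf.sub hg)
    (fun a a' => by simp only [Pi.sub_apply, AddCircle.coe_sub, h, sub_self]) x 0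
  simp only [Pi.sub_apply] at this
  linarith

theorem Function.commute_of_strictMono_of_comp_eq_add_const {H : Type*} [Group H] [Fintype H]
    {F : H → ℝ → ℝ} (hmono : ∀ h, StrictMono (F h))
    (hcomp : ∀ h k, ∃ c, ∀ x, F h (F k x) = F (h * k) x + c) (k l : H) :
    Function.Commute (F k) (F l) := by
  choose c hc using hcomp
  set Ψ : ℝ → ℝ := fun x => ∑ h, F h x
  have hΨ : StrictMono Ψ := fun a b hab =>
    Finset.sum_lt_sum_of_nonempty Finset.univ_nonempty fun h _ => hmono h hab
  have hΨ_comp : ∀ k x, Ψ (F k x) = Ψ x + ∑ h, c h k := fun k x => by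
    simp only [Ψ, hc, Finset.sum_add_distrib]
    congr 1
    exact Fintype.sum_equiv (Equiv.mulRight k) _ _ fun _ => rfl
  intro x
  apply hΨ.injective
  rw [hΨ_comp, hΨ_comp, hΨ_comp, hΨ_comp]
  ring

section CircleLifts

variable {g₁ g₂ : UnitAddCircle ≃ₜ UnitAddCircle} {F₁ F₂ : ℝ → ℝ}

theorem coe_comp_lift_eq_mul (h₁ : ∀ x, (F₁ x : UnitAddCircle) = g₁ x)
    (h₂ : ∀ x, (F₂ x : UnitAddCircle) = g₂ x) (x : ℝ) :
    (F₁ (F₂ x) : UnitAddCircle) = (g₁ * g₂) x := by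
  rw [h₁, h₂]
  rfl

theorem commute_of_lifts_commute (h₁ : ∀ x, (F₁ x : UnitAddCircle) = g₁ x)
    (h₂ : ∀ x, (F₂ x : UnitAddCircle) = g₂ x) (hF : Function.Commute F₁ F₂) :
    Commute g₁ g₂ := by
  refine Homeomorph.ext fun z => ?_
  induction z using QuotientAddGroup.induction_on with
  | H x =>
    rw [← coe_comp_lift_eq_mul h₁ h₂, ← coe_comp_lift_eq_mul h₂ h₁, hF x]

end CircleLifts

theorem MonoidHom.map_commutator_eq_one {G G' : Type*} [Group G] [Group G'] (f : G →* G')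
    (hf : ∀ a b, Commute (f a) (f b)) {g : G} (hg : g ∈ commutator G) : f g = 1 := by
  suffices commutator G ≤ f.ker from this hg
  rw [commutator_def, Subgroup.commutator_le]
  intro a _ b _
  rw [MonoidHom.mem_ker, map_commutatorElement, commutatorElement_eq_one_iff_commute]
  exact hf a b

/-- If a finite group `H` acts on the circle `ℝ/ℤ` by
orientation-preserving `C¹` diffeomorphisms, then the commutator subgroup `[H,H]`
acts trivially. -/
theorem stmt7 (H : Type*) [Group H] [Finite H]
    (ρ : H →* (UnitAddCircle ≃ₜ UnitAddCircle))
    (hρ : ∀ h : H, IsOrientationPreservingC1Diffeo (ρ h)) :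
    ∀ h ∈ commutator H, ρ h = 1 := by
  have := Fintype.ofFinite H
  choose F hC1 hderiv _ hlift using hρ
  have hcomp : ∀ h k, ∃ c, ∀ x, F h (F k x) = F (h * k) x + c := fun h k =>
    AddCircle.exists_add_const_of_coe_eq ((hC1 h).continuous.comp (hC1 k).continuous)
      (hC1 (h * k)).continuous fun x => by
        rw [coe_comp_lift_eq_mul (hlift h) (hlift k), hlift, map_mul]
  have hcommute : ∀ k l, Function.Commute (F k) (F l) :=
    Function.commute_of_strictMono_of_comp_eq_add_const (fun h => strictMono_of_deriv_pos (hderiv h)) hcomp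
  exact fun h => ρ.map_commutator_eq_one fun k l =>
    commute_of_lifts_commute (hlift k) (hlift l) (hcommute k l)
end

section
/- Let K be a nonempty, compact, perfect subset of the circle ℝ/ℤ. Define an equivalence relation ~ on K by declaring x ~ y if and only if x = y, or x and y both belong to the closure of a single connected component of the complement (ℝ/ℤ) \ K. Then the quotient topological space K/~ is homeomorphic to the circle ℝ/ℤ. -/
/-!
Choose an atomless probability measure `μ` on the circle whose support is exactly `K`: push the
Lebesgue measure of `[0, 1]` into Cantor sets inside the pieces `closure (B ∩ K)`, `B` running
over a countable basis, and combine the countably many results. The distribution function of `μ`,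
lifted to a degree-one map `cdfLift μ : ℝ → ℝ`, descends to a continuous surjection `cdfMap μ` of
the circle. For `u ≤ v ≤ u + 1`, `cdfLift μ v - cdfLift μ u` is the mass of the arc `(u, v)`, so
`cdfMap μ` identifies two points of `K` exactly when one of the two arcs between them carries no
mass, i.e. misses `K`, i.e. is a gap. Hence `cdfMap μ` induces a continuous bijection
`K/~ → ℝ/ℤ`, a homeomorphism because `K/~` is compact.
-/

/-- The relation on a subset `K` of the circle identifying the two endpoints of each
gap (connected component of the complement of `K`): `x ~ y` iff `x = y` or `x` and
`y` both lie in the closure of a single connected component of `(ℝ/ℤ) \ K`. -/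
def gapRel (K : Set UnitAddCircle) (x y : K) : Prop :=
  x = y ∨ ∃ z ∈ Kᶜ, (x : UnitAddCircle) ∈ closure (connectedComponentIn Kᶜ z) ∧
    (y : UnitAddCircle) ∈ closure (connectedComponentIn Kᶜ z)

open MeasureTheory Measure Set Filter Topology TopologicalSpace Function ProbabilityTheory

theorem MeasureTheory.Measure.measure_eq_zero_iff_disjoint_support {X : Type*}
    [TopologicalSpace X] [MeasurableSpace X] [HereditarilyLindelofSpace X]
    {μ : Measure X} {U : Set X} (hU : IsOpen U) : μ U = 0 ↔ Disjoint U μ.support :=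
  ⟨fun h => subset_compl_iff_disjoint_right.mp (subset_compl_support_of_isOpen hU h),
    fun h => measure_mono_null h.subset_compl_right measure_compl_support⟩

section Perfect

variable {X : Type*} [MetricSpace X] [CompleteSpace X] [MeasurableSpace X] [BorelSpace X]

theorem Perfect.exists_isProbabilityMeasure_measure_compl_eq_zero {C : Set X} (hC : Perfect C)
    (hne : C.Nonempty) :
    ∃ μ : Measure X, IsProbabilityMeasure μ ∧ NullSingletonClass μ ∧ μ Cᶜ = 0 := by
  obtain ⟨f, hfC, hfc, hfi⟩ := hC.exists_nat_bool_injection hne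
  obtain ⟨g, hgm, hgi⟩ := MeasurableSpace.measurable_injection_nat_bool_of_countablySeparated
    unitInterval
  have hφ : Measurable (f ∘ g) := hfc.measurable.comp hgm
  refine ⟨volume.map (f ∘ g), isProbabilityMeasure_map hφ.aemeasurable, ⟨fun x => ?_⟩, ?_⟩
  · rw [map_apply hφ (measurableSet_singleton x)]
    exact Subsingleton.measure_zero (fun s hs t ht => hfi.comp hgi (hs.trans ht.symm)) _
  · have hpre : f ∘ g ⁻¹' C = univ := eq_univ_of_forall fun t => hfC (mem_range_self (g t))
    rw [map_apply hφ hC.closed.isOpen_compl.measurableSet, preimage_compl, hpre, compl_univ,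
      measure_empty]

variable [SecondCountableTopology X]

theorem Perfect.exists_isProbabilityMeasure_support_eq {K : Set X} (hK : Perfect K)
    (hne : K.Nonempty) :
    ∃ μ : Measure X, IsProbabilityMeasure μ ∧ NullSingletonClass μ ∧ μ.support = K := by
  obtain ⟨b, hbc, -, hb⟩ := exists_countable_basis X
  let ι := {B // B ∈ b ∧ (B ∩ K).Nonempty}
  have : Countable ι := (hbc.mono fun _ hB => hB.1).to_subtype
  have hpiece (i : ι) : ∃ m : Measure X, IsProbabilityMeasure m ∧ NullSingletonClass m ∧
      m (closure (i.1 ∩ K))ᶜ = 0 :=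
    (hK.acc.open_inter (hb.isOpen i.2.1)).perfect_closure
      |>.exists_isProbabilityMeasure_measure_compl_eq_zero (i.2.2.mono subset_closure)
  choose m hm₁ hm₂ hm₃ using hpiece
  have hmK (i : ι) : m i Kᶜ = 0 :=
    measure_mono_null (compl_subset_compl.mpr (closure_minimal inter_subset_right hK.closed))
      (hm₃ i)
  have hmU (i : ι) {U : Set X} (hU : closure i.1 ⊆ U) : m i U ≠ 0 := by
    have hsub : closure (i.1 ∩ K) ⊆ U := (closure_mono inter_subset_left).trans hU
    have h1 : m i (closure (i.1 ∩ K)) = 1 :=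
      (prob_compl_eq_zero_iff isClosed_closure.measurableSet).mp (hm₃ i)
    exact ne_of_gt (lt_of_lt_of_le (by simp [h1]) (measure_mono hsub))
  obtain ⟨x, hx⟩ := hne
  obtain ⟨B₀, hB₀, hxB₀, -⟩ := hb.exists_closure_subset (x := x) univ_mem
  have : NeZero (Measure.sum m) := ⟨fun h => hmU ⟨B₀, hB₀, x, hxB₀, hx⟩ (subset_univ _)
    (Measure.sum_apply_eq_zero.mp (by rw [h, Measure.coe_zero, Pi.zero_apply]) _)⟩
  refine ⟨(Measure.sum m).toFinite, inferInstance,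
    ⟨fun y => toFinite_apply_eq_zero_iff.mpr (sum_apply_eq_zero.mpr fun _ => measure_singleton y)⟩,
    subset_antisymm (support_subset_of_isClosed hK.closed ?_) fun y hy => ?_⟩
  · exact toFinite_apply_eq_zero_iff.mpr (Measure.sum_apply_eq_zero.mpr hmK)
  · refine (mem_support_iff_forall y).mpr fun U hU => pos_iff_ne_zero.mpr ?_
    obtain ⟨B, hB, hyB, hBU⟩ := hb.exists_closure_subset hU
    rw [Ne, toFinite_apply_eq_zero_iff, Measure.sum_apply_eq_zero]
    exact fun h => hmU ⟨B, hB, y, hyB, hy⟩ hBU (h _)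

end Perfect

namespace ProbabilityTheory

variable (ν : Measure ℝ) [IsProbabilityMeasure ν] [NullSingletonClass ν]

theorem continuous_cdf : Continuous (cdf ν) := by
  refine continuous_iff_continuousAt.mpr fun x => continuousAt_iff_continuous_left'_right'.mpr
    ⟨?_, ((cdf ν).right_continuous x).mono Ioi_subset_Ici_self⟩
  rw [(monotone_cdf ν).continuousWithinAt_Iio_iff_leftLim_eq]
  have h := (cdf ν).measure_singleton x
  rw [measure_cdf, measure_singleton, eq_comm, ENNReal.ofReal_eq_zero, sub_nonpos] at h
  exact le_antisymm ((monotone_cdf ν).leftLim_le le_rfl) h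

theorem cdf_sub_cdf {a b : ℝ} (hab : a ≤ b) : cdf ν b - cdf ν a = ν.real (Ioo a b) := by
  have h := (cdf ν).measure_Ioc a b
  rw [measure_cdf] at h
  rw [measureReal_def, measure_congr Ioo_ae_eq_Ioc, h,
    ENNReal.toReal_ofReal (sub_nonneg.mpr (monotone_cdf ν hab))]

end ProbabilityTheory

namespace UnitAddCircle

noncomputable section

def openArc (u v : ℝ) : Set UnitAddCircle := ((↑) : ℝ → UnitAddCircle) '' Ioo u v

theorem isOpen_openArc (u v : ℝ) : IsOpen (openArc u v) :=
  QuotientAddGroup.isOpenMap_coe _ isOpen_Ioo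

theorem openArc_add_intCast (u v : ℝ) (n : ℤ) : openArc (u + n) (v + n) = openArc u v := by
  ext z
  constructor
  · rintro ⟨x, hx, rfl⟩
    exact ⟨x - n, ⟨by linarith [hx.1], by linarith [hx.2]⟩, by simp⟩
  · rintro ⟨x, hx, rfl⟩
    exact ⟨x + n, ⟨by linarith [hx.1], by linarith [hx.2]⟩, by simp⟩

def toIco (z : UnitAddCircle) : ℝ := AddCircle.equivIco 1 0 z

theorem measurable_toIco : Measurable toIco :=
  measurable_subtype_coe.comp (AddCircle.measurableEquivIco 1 0).measurable

@[simp]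
theorem toIco_coe (x : ℝ) : toIco x = Int.fract x := by simp [toIco]

@[simp]
theorem coe_toIco (z : UnitAddCircle) : (toIco z : UnitAddCircle) = z := AddCircle.coe_equivIco

theorem toIco_mem_Ico (z : UnitAddCircle) : toIco z ∈ Ico 0 1 := by
  simpa [toIco] using (AddCircle.equivIco 1 0 z).2

theorem toIco_injective : Injective toIco := fun z w h => by
  rw [← coe_toIco z, h, coe_toIco]

theorem preimage_toIco_Ioo {a b : ℝ} (ha : 0 ≤ a) (hb : b ≤ 1) :
    toIco ⁻¹' Ioo a b = openArc a b := by
  ext z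
  refine ⟨fun hz => ⟨toIco z, hz, coe_toIco z⟩, ?_⟩
  rintro ⟨x, hx, rfl⟩
  rwa [mem_preimage, toIco_coe, Int.fract_eq_self.mpr ⟨by linarith [hx.1], by linarith [hx.2]⟩]

def cdfLift (μ : Measure UnitAddCircle) (t : ℝ) : ℝ :=
  ⌊t⌋ + cdf (μ.map toIco) (Int.fract t)

variable (μ : Measure UnitAddCircle)

theorem cdfLift_add_intCast (t : ℝ) (n : ℤ) : cdfLift μ (t + n) = cdfLift μ t + n := by
  simp only [cdfLift, Int.floor_add_intCast, Int.fract_add_intCast]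
  push_cast
  ring

theorem cdfLift_add_one (t : ℝ) : cdfLift μ (t + 1) = cdfLift μ t + 1 := by
  simpa using cdfLift_add_intCast μ t 1

theorem periodic_coe_cdfLift : Periodic (fun t => (cdfLift μ t : UnitAddCircle)) 1 := fun t => by
  simp [cdfLift_add_one]

def cdfMap : UnitAddCircle → UnitAddCircle := (periodic_coe_cdfLift μ).lift

@[simp]
theorem cdfMap_coe (t : ℝ) : cdfMap μ t = cdfLift μ t := rfl

theorem monotone_cdfLift : Monotone (cdfLift μ) := by
  intro s t hst
  rcases (Int.floor_le_floor hst).eq_or_lt with h | h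
  · have : Int.fract s ≤ Int.fract t := by
      rw [Int.fract, Int.fract, h]
      linarith
    simpa [cdfLift, h] using monotone_cdf _ this
  · calc cdfLift μ s ≤ ⌊s⌋ + 1 := by
          rw [cdfLift]
          linarith [cdf_le_one (μ.map toIco) (Int.fract s)]
      _ ≤ ⌊t⌋ := by exact_mod_cast h
      _ ≤ cdfLift μ t := by
          rw [cdfLift]
          linarith [cdf_nonneg (μ.map toIco) (Int.fract t)]

variable [IsProbabilityMeasure μ]

instance : IsProbabilityMeasure (μ.map toIco) :=
  isProbabilityMeasure_map measurable_toIco.aemeasurable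

theorem cdf_map_toIco_one : cdf (μ.map toIco) 1 = 1 := by
  have huniv : toIco ⁻¹' Iic 1 = univ := eq_univ_of_forall fun z => (toIco_mem_Ico z).2.le
  rw [cdf_eq_real, map_measureReal_apply measurable_toIco measurableSet_Iic, huniv, probReal_univ]

variable [NullSingletonClass μ]

instance : NullSingletonClass (μ.map toIco) := ⟨fun x => by
  rw [map_apply measurable_toIco (measurableSet_singleton x)]
  exact Subsingleton.measure_zero (fun z hz w hw => toIco_injective (hz.trans hw.symm)) _⟩

theorem cdf_map_toIco_zero : cdf (μ.map toIco) 0 = 0 := by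
  have hsub : (toIco ⁻¹' Iic 0).Subsingleton := fun z hz w hw => toIco_injective
    ((le_antisymm hz (toIco_mem_Ico z).1).trans (le_antisymm hw (toIco_mem_Ico w).1).symm)
  rw [cdf_eq_real, map_measureReal_apply measurable_toIco measurableSet_Iic, measureReal_def,
    hsub.measure_zero, ENNReal.toReal_zero]

theorem cdfLift_intCast (n : ℤ) : cdfLift μ n = n := by
  simp [cdfLift, cdf_map_toIco_zero]

theorem cdfLift_of_mem_Icc {n : ℤ} {s : ℝ} (hs : s ∈ Icc (n : ℝ) (n + 1)) :
    cdfLift μ s = n + cdf (μ.map toIco) (s - n) := by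
  rcases hs.2.lt_or_eq with h | rfl
  · rw [cdfLift, Int.fract, Int.floor_eq_iff.mpr ⟨hs.1, h⟩]
  · have := cdfLift_add_one μ n
    rw [cdfLift_intCast] at this
    rw [this, add_sub_cancel_left, cdf_map_toIco_one]

theorem continuous_cdfLift : Continuous (cdfLift μ) := by
  have hper : Continuous ((fun s => cdf (μ.map toIco) s - s) ∘ Int.fract) :=
    ((continuous_cdf _).sub continuous_id).continuousOn.comp_fract''
      (by simp [cdf_map_toIco_zero, cdf_map_toIco_one])
  convert continuous_id.add hper using 1
  ext t
  simp only [cdfLift, Pi.add_apply, comp_apply, id]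
  linarith [Int.floor_add_fract t]

theorem cdfLift_sub_cdfLift {n : ℤ} {u v : ℝ} (hu : u ∈ Icc (n : ℝ) (n + 1))
    (hv : v ∈ Icc (n : ℝ) (n + 1)) (huv : u ≤ v) :
    cdfLift μ v - cdfLift μ u = μ.real (openArc u v) := by
  rw [cdfLift_of_mem_Icc μ hv, cdfLift_of_mem_Icc μ hu, add_sub_add_left_eq_sub,
    cdf_sub_cdf _ (by linarith), map_measureReal_apply measurable_toIco measurableSet_Ioo,
    preimage_toIco_Ioo (by linarith [hu.1]) (by linarith [hv.2]), ← openArc_add_intCast _ _ n]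
  simp

theorem cdfLift_eq_cdfLift_iff_of_mem_Icc {n : ℤ} {u v : ℝ} (hu : u ∈ Icc (n : ℝ) (n + 1))
    (hv : v ∈ Icc (n : ℝ) (n + 1)) (huv : u ≤ v) :
    cdfLift μ u = cdfLift μ v ↔ μ (openArc u v) = 0 := by
  rw [eq_comm, ← sub_eq_zero, cdfLift_sub_cdfLift μ hu hv huv, measureReal_eq_zero_iff]

theorem cdfLift_eq_cdfLift_iff {u v : ℝ} (huv : u ≤ v) (hvu : v ≤ u + 1) :
    cdfLift μ u = cdfLift μ v ↔ μ (openArc u v) = 0 := by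
  have hu : u ∈ Icc (⌊u⌋ : ℝ) (⌊u⌋ + 1) := ⟨Int.floor_le u, (Int.lt_floor_add_one u).le⟩
  rcases le_or_gt v (⌊u⌋ + 1) with hv | hv
  · exact cdfLift_eq_cdfLift_iff_of_mem_Icc μ hu ⟨hu.1.trans huv, hv⟩ huv
  set m : ℝ := ⌊u⌋ + 1
  have hum : u < m := Int.lt_floor_add_one u
  have hm : m ∈ Icc ((⌊u⌋ + 1 : ℤ) : ℝ) ((⌊u⌋ + 1 : ℤ) + 1) := by
    push_cast
    exact ⟨le_rfl, by linarith⟩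
  have hv' : v ∈ Icc ((⌊u⌋ + 1 : ℤ) : ℝ) ((⌊u⌋ + 1 : ℤ) + 1) := by
    push_cast
    exact ⟨hv.le, by linarith [hu.1]⟩
  have hsplit : cdfLift μ u = cdfLift μ v ↔
      cdfLift μ u = cdfLift μ m ∧ cdfLift μ m = cdfLift μ v := by
    refine ⟨fun h => ?_, fun h => h.1.trans h.2⟩
    have h₁ := monotone_cdfLift μ hum.le
    have h₂ := monotone_cdfLift μ hv.le
    constructor <;> linarith
  -- the point `m` where the arc crosses the seam carries no mass
  have harc : openArc u v ⊆ openArc u m ∪ {(m : UnitAddCircle)} ∪ openArc m v := by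
    rintro _ ⟨x, hx, rfl⟩
    rcases lt_trichotomy x m with h | rfl | h
    · exact Or.inl (Or.inl ⟨x, ⟨hx.1, h⟩, rfl⟩)
    · exact Or.inl (Or.inr rfl)
    · exact Or.inr ⟨x, ⟨h, hx.2⟩, rfl⟩
  rw [hsplit, cdfLift_eq_cdfLift_iff_of_mem_Icc μ hu ⟨hu.1.trans hum.le, le_rfl⟩ hum.le,
    cdfLift_eq_cdfLift_iff_of_mem_Icc μ hm hv' hv.le]
  refine ⟨fun h => measure_mono_null harc (measure_union_null (measure_union_null h.1
    (measure_singleton _)) h.2), fun h => ⟨measure_mono_null ?_ h, measure_mono_null ?_ h⟩⟩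
  · exact image_mono (Ioo_subset_Ioo_right hv.le)
  · exact image_mono (Ioo_subset_Ioo_left hum.le)

theorem continuous_cdfMap : Continuous (cdfMap μ) :=
  isQuotientMap_quotient_mk'.continuous_iff.mpr
    (continuous_quotient_mk'.comp (continuous_cdfLift μ))

theorem surjective_cdfLift : Surjective (cdfLift μ) := by
  intro r
  have hmem : r ∈ Icc (cdfLift μ ⌊r⌋) (cdfLift μ (⌊r⌋ + 1 : ℤ)) := by
    rw [cdfLift_intCast, cdfLift_intCast]
    push_cast
    exact ⟨Int.floor_le r, (Int.lt_floor_add_one r).le⟩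
  obtain ⟨t, -, ht⟩ := intermediate_value_Icc (by push_cast; linarith)
    (continuous_cdfLift μ).continuousOn hmem
  exact ⟨t, ht⟩

theorem exists_coe_mem_support_cdfLift_eq (t : ℝ) :
    ∃ a : ℝ, (a : UnitAddCircle) ∈ μ.support ∧ cdfLift μ a = cdfLift μ t := by
  -- `sSup S` is the last point of the lifted support up to `t`; the lift is `1`-periodic
  set S : Set ℝ := (↑) ⁻¹' μ.support ∩ Iic t
  obtain ⟨z, hz⟩ := nonempty_support (IsProbabilityMeasure.ne_zero μ)
  obtain ⟨x, rfl⟩ := QuotientAddGroup.mk_surjective z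
  have hxS : x + ⌊t - x⌋ ∈ S :=
    ⟨by simpa using hz, mem_Iic.mpr (by linarith [Int.floor_le (t - x)])⟩
  have hbdd : BddAbove S := ⟨t, fun _ h => h.2⟩
  have haS : sSup S ∈ S :=
    ((isClosed_support.preimage continuous_quotient_mk').inter isClosed_Iic).csSup_mem
      ⟨_, hxS⟩ hbdd
  refine ⟨sSup S, haS.1, (cdfLift_eq_cdfLift_iff μ haS.2 ?_).mpr ?_⟩
  · linarith [le_csSup hbdd hxS, Int.lt_floor_add_one (t - x)]
  · rw [measure_eq_zero_iff_disjoint_support (isOpen_openArc _ _), Set.disjoint_left]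
    rintro _ ⟨s, hs, rfl⟩ hsupp
    linarith [le_csSup hbdd ⟨hsupp, hs.2.le⟩, hs.1]

theorem surjOn_cdfMap_support : SurjOn (cdfMap μ) μ.support univ := by
  intro w _
  obtain ⟨r, rfl⟩ := QuotientAddGroup.mk_surjective w
  obtain ⟨t, rfl⟩ := surjective_cdfLift μ r
  obtain ⟨a, ha, hat⟩ := exists_coe_mem_support_cdfLift_eq μ t
  exact ⟨a, ha, by rw [cdfMap_coe, hat]⟩

theorem measure_openArc_eq_zero_of_cdfMap_eq {u v : ℝ} (huv : u ≤ v) (hvu : v < u + 1)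
    (h : cdfMap μ u = cdfMap μ v) : μ (openArc u v) = 0 ∨ μ (openArc v (u + 1)) = 0 := by
  obtain ⟨k, hk⟩ := AddSubgroup.mem_zmultiples_iff.mp (QuotientAddGroup.eq.mp h)
  rw [zsmul_one, neg_add_eq_sub] at hk
  have h₀ : 0 ≤ cdfLift μ v - cdfLift μ u := sub_nonneg.mpr (monotone_cdfLift μ huv)
  have h₁ : cdfLift μ v - cdfLift μ u ≤ 1 := by
    linarith [monotone_cdfLift μ hvu.le, cdfLift_add_one μ u]
  have hk01 : k = 0 ∨ k = 1 := by
    rw [← hk] at h₀ h₁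
    have : 0 ≤ k := by exact_mod_cast h₀
    have : k ≤ 1 := by exact_mod_cast h₁
    omega
  rcases hk01 with rfl | rfl
  · exact Or.inl ((cdfLift_eq_cdfLift_iff μ huv hvu.le).mp (by push_cast at hk; linarith))
  · refine Or.inr ((cdfLift_eq_cdfLift_iff μ hvu.le (by linarith)).mp ?_)
    push_cast at hk
    linarith [cdfLift_add_one μ u]

theorem cdfMap_eventually_eq {U : Set UnitAddCircle} (hU : IsOpen U) (hμU : μ U = 0)
    {w : UnitAddCircle} (hw : w ∈ U) : ∀ᶠ w' in 𝓝 w, cdfMap μ w' = cdfMap μ w := by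
  obtain ⟨x, rfl⟩ := QuotientAddGroup.mk_surjective w
  obtain ⟨ε, hε, hball⟩ := Metric.mem_nhds_iff.mp
    ((hU.preimage continuous_quotient_mk').mem_nhds hw)
  rw [Real.ball_eq_Ioo] at hball
  set δ := min ε (1 / 2)
  have hδ : 0 < δ := lt_min hε one_half_pos
  have hconst {a b : ℝ} (ha : a ∈ Ioo (x - δ) (x + δ)) (hb : b ∈ Ioo (x - δ) (x + δ))
      (hab : a ≤ b) : cdfLift μ a = cdfLift μ b := by
    refine (cdfLift_eq_cdfLift_iff μ hab (by linarith [ha.1, hb.2, min_le_right ε (1 / 2)])).mpr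
      (measure_mono_null ?_ hμU)
    rintro _ ⟨s, hs, rfl⟩
    exact hball ⟨by linarith [ha.1, hs.1, min_le_left ε (1 / 2)],
      by linarith [hb.2, hs.2, min_le_left ε (1 / 2)]⟩
  have hx : x ∈ Ioo (x - δ) (x + δ) := ⟨by linarith, by linarith⟩
  filter_upwards [(isOpen_openArc (x - δ) (x + δ)).mem_nhds ⟨x, hx, rfl⟩]
  rintro _ ⟨y, hy, rfl⟩
  rw [cdfMap_coe, cdfMap_coe]
  rcases le_total x y with h | h
  · rw [hconst hx hy h]
  · rw [hconst hy hx h]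

theorem eqOn_cdfMap_closure_connectedComponentIn {U : Set UnitAddCircle} (hU : IsOpen U)
    (hμU : μ U = 0) {z : UnitAddCircle} (hz : z ∈ U) :
    EqOn (cdfMap μ) (fun _ => cdfMap μ z) (closure (connectedComponentIn U z)) := by
  refine EqOn.closure (fun w hw => ?_) (continuous_cdfMap μ) continuous_const
  have hloc : IsLocallyConstant fun w : U => cdfMap μ w :=
    (IsLocallyConstant.iff_eventually_eq _).mpr fun w =>
      continuous_subtype_val.continuousAt.eventually (cdfMap_eventually_eq μ hU hμU w.2)
  rw [connectedComponentIn_eq_image hz] at hw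
  obtain ⟨w, hw, rfl⟩ := hw
  exact hloc.apply_eq_of_isPreconnected isPreconnected_connectedComponent hw
    mem_connectedComponent

end

end UnitAddCircle

open UnitAddCircle

theorem gapRel_symm {K : Set UnitAddCircle} {x y : K} : gapRel K x y → gapRel K y x :=
  Or.imp Eq.symm fun ⟨z, hz, hx, hy⟩ => ⟨z, hz, hy, hx⟩

theorem gapRel_of_openArc_subset_compl {K : Set UnitAddCircle} {x y : K} {u v : ℝ} (huv : u ≤ v)
    (hx : (x : UnitAddCircle) = u) (hy : (y : UnitAddCircle) = v) (harc : openArc u v ⊆ Kᶜ) :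
    gapRel K x y := by
  rcases huv.eq_or_lt with rfl | huv
  · exact Or.inl (Subtype.ext (hx.trans hy.symm))
  have hmid : (u + v) / 2 ∈ Ioo u v := ⟨by linarith, by linarith⟩
  have hC : openArc u v ⊆ connectedComponentIn Kᶜ ((u + v) / 2 : ℝ) :=
    (isPreconnected_Ioo.image _ continuous_quotient_mk'.continuousOn).subset_connectedComponentIn
      (mem_image_of_mem _ hmid) harc
  have hcl {s : ℝ} (hs : s ∈ Icc u v) :
      (s : UnitAddCircle) ∈ closure (connectedComponentIn Kᶜ ((u + v) / 2 : ℝ)) :=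
    closure_mono hC (image_closure_subset_closure_image continuous_quotient_mk'
      (mem_image_of_mem _ (by rwa [closure_Ioo huv.ne])))
  exact Or.inr ⟨_, harc (mem_image_of_mem _ hmid), hx ▸ hcl ⟨le_rfl, huv.le⟩,
    hy ▸ hcl ⟨huv.le, le_rfl⟩⟩

theorem gapRel_of_cdfMap_eq {μ : Measure UnitAddCircle} [IsProbabilityMeasure μ]
    [NullSingletonClass μ] {x y : μ.support} (h : cdfMap μ x = cdfMap μ y) :
    gapRel μ.support x y := by
  obtain ⟨u, hu⟩ := QuotientAddGroup.mk_surjective (x : UnitAddCircle)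
  set v : ℝ := (AddCircle.equivIco 1 u y).1
  have hv : (v : UnitAddCircle) = y := AddCircle.coe_equivIco
  have hvmem : v ∈ Ico u (u + 1) := (AddCircle.equivIco 1 u y).2
  have hu₁ : ((u + 1 : ℝ) : UnitAddCircle) = x := by simpa using hu
  have hnull {a b : ℝ} (h : μ (openArc a b) = 0) : openArc a b ⊆ μ.supportᶜ :=
    subset_compl_support_of_isOpen (isOpen_openArc a b) h
  rw [← hu, ← hv] at h
  rcases measure_openArc_eq_zero_of_cdfMap_eq μ hvmem.1 hvmem.2 h with h₀ | h₀
  · exact gapRel_of_openArc_subset_compl hvmem.1 hu.symm hv.symm (hnull h₀)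
  · exact gapRel_symm (gapRel_of_openArc_subset_compl hvmem.2.le hv.symm hu₁.symm (hnull h₀))

theorem cdfMap_eq_iff_gapRel {μ : Measure UnitAddCircle} [IsProbabilityMeasure μ]
    [NullSingletonClass μ] {x y : μ.support} : cdfMap μ x = cdfMap μ y ↔ gapRel μ.support x y := by
  refine ⟨gapRel_of_cdfMap_eq, ?_⟩
  rintro (rfl | ⟨z, hz, hx, hy⟩)
  · rfl
  · have hconst := eqOn_cdfMap_closure_connectedComponentIn μ isOpen_compl_support
      measure_compl_support hz
    rw [hconst hx, hconst hy]

theorem stmt8_general (K : Set UnitAddCircle) (hne : K.Nonempty) (hperfect : Perfect K) :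
    Nonempty (Quot (gapRel K) ≃ₜ UnitAddCircle) := by
  obtain ⟨μ, _, _, rfl⟩ := hperfect.exists_isProbabilityMeasure_support_eq hne
  set f : Quot (gapRel μ.support) → UnitAddCircle :=
    Quot.lift (fun x => cdfMap μ x) fun _ _ => cdfMap_eq_iff_gapRel.mpr
  have hinj : Injective f := by
    rintro ⟨x⟩ ⟨y⟩ h
    exact Quot.sound (cdfMap_eq_iff_gapRel.mp h)
  have hsurj : Surjective f := fun w =>
    let ⟨x, hx, hxw⟩ := surjOn_cdfMap_support μ (mem_univ w)
    ⟨Quot.mk _ ⟨x, hx⟩, hxw⟩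
  have : CompactSpace μ.support := isCompact_iff_compactSpace.mp isClosed_support.isCompact
  exact ⟨(continuous_quot_lift _ ((continuous_cdfMap μ).comp continuous_subtype_val)
    ).homeoOfEquivCompactToT2 (f := Equiv.ofBijective f ⟨hinj, hsurj⟩)⟩

/-- If `K` is a nonempty, compact, perfect subset of the circle
`ℝ/ℤ`, then the quotient of `K` by the relation collapsing the two endpoints of each
gap of `K` to a point is homeomorphic to the circle. -/
theorem stmt8 (K : Set UnitAddCircle) (hne : K.Nonempty) (hcompact : IsCompact K)
    (hperfect : Perfect K) :
    Nonempty (Quot (gapRel K) ≃ₜ UnitAddCircle) :=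
  stmt8_general K hne hperfect
end
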